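/- arXiv:2005.01280 — 3 statements merged into one kernel-verified Lean document; each statement's English description precedes it below -/
import Mathlib

section
/- Let m, n be positive integers with n > 1, let x_1, …, x_n ∈ ℝ^m, and let ε > 0. Then the ε-Frobenius entropy is a strictly increasing function of the time index, i.e., η_{j+1} > η_j for every j ∈ {1,…,n−1}, if and only if ‖x_j − x_k‖ ≥ ε for all distinct indices j, k ∈ {1,…,n}. -/
/-- The recurrence count `N_j`: the number of pairs `(i,k) ∈ {1,…,j}²` with
`‖x_i − x_k‖ < ε`. -/
noncomputable def recCount {m : ℕ} (x : ℕ → EuclideanSpace ℝ (Fin m)) (ε : ℝ) (j : ℕ) : ℕ :=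
  (((Finset.Icc 1 j) ×ˢ (Finset.Icc 1 j)).filter (fun p => ‖x p.1 - x p.2‖ < ε)).card

/-- The ε-Frobenius potential `v_j = N_j / j²`. -/
noncomputable def frobPot {m : ℕ} (x : ℕ → EuclideanSpace ℝ (Fin m)) (ε : ℝ) (j : ℕ) : ℝ :=
  (recCount x ε j : ℝ) / (j : ℝ) ^ 2

/-- The ε-Frobenius entropy `η_j = −log v_j`. -/
noncomputable def frobEnt {m : ℕ} (x : ℕ → EuclideanSpace ℝ (Fin m)) (ε : ℝ) (j : ℕ) : ℝ :=
  - Real.log (frobPot x ε j)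


/-!
Since `ε > 0`, the diagonal always recurs, so `N_j = j + c_j`, where `c_j` counts the close
off-diagonal pairs; by symmetry `c_j ≠ 1`. If all distinct points are `ε`-apart, then `v_j = 1/j`
and `η_j = log j` is strictly increasing. Conversely, at the first time `j + 1` at which a close
pair appears, `N_{j+1} ≥ j + 3` while `v_j = 1/j`, and `(j + 3)/(j + 1)² ≥ 1/j`, so
`η_{j+1} ≤ η_j`.
-/

section PairCounting

variable {α : Type*} (s : Finset α) (r : α → α → Prop) [DecidableRel r]

theorem Finset.card_filter_product_self_of_refl [DecidableEq α] (hr : ∀ a, r a a) :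
    ((s ×ˢ s).filter fun p => r p.1 p.2).card =
      s.card + (s.offDiag.filter fun p => r p.1 p.2).card := by
  rw [← s.diag_union_offDiag, Finset.filter_union, Finset.card_union_of_disjoint
    (s.disjoint_diag_offDiag.mono (Finset.filter_subset _ _) (Finset.filter_subset _ _)),
    Finset.filter_true_of_mem fun p hp => (Finset.mem_diag.1 hp).2 ▸ hr p.1, Finset.diag_card]

theorem Finset.card_filter_offDiag_ne_one_of_symm (hr : ∀ a b, r a b → r b a) :
    (s.offDiag.filter fun p => r p.1 p.2).card ≠ 1 := by
  intro h
  obtain ⟨⟨a, b⟩, hab⟩ := Finset.card_eq_one.1 h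
  have hmem : (a, b) ∈ s.offDiag.filter fun p => r p.1 p.2 := hab ▸ Finset.mem_singleton_self _
  simp only [Finset.mem_filter, Finset.mem_offDiag] at hmem
  have hswap : (b, a) ∈ s.offDiag.filter fun p => r p.1 p.2 := by
    simp only [Finset.mem_filter, Finset.mem_offDiag]
    exact ⟨⟨hmem.1.2.1, hmem.1.1, hmem.1.2.2.symm⟩, hr a b hmem.2⟩
  rw [hab, Finset.mem_singleton, Prod.mk.injEq] at hswap
  exact hmem.1.2.2 hswap.2

end PairCounting

section FrobeniusEntropy

variable {m : ℕ} {x : ℕ → EuclideanSpace ℝ (Fin m)} {ε : ℝ} {j : ℕ}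

theorem recCount_eq_add_card_offDiag (hε : 0 < ε) :
    recCount x ε j =
      j + ((Finset.Icc 1 j).offDiag.filter fun p => ‖x p.1 - x p.2‖ < ε).card := by
  rw [recCount, Finset.card_filter_product_self_of_refl _ (fun a b => ‖x a - x b‖ < ε)
    (by simpa using hε), Nat.card_Icc, Nat.add_sub_cancel]

theorem recCount_eq_self_iff (hε : 0 < ε) :
    recCount x ε j = j ↔
      ∀ a b, 1 ≤ a → a ≤ j → 1 ≤ b → b ≤ j → a ≠ b → ε ≤ ‖x a - x b‖ := by
  simp [recCount_eq_add_card_offDiag hε, Finset.filter_eq_empty_iff, and_imp]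

theorem add_two_le_recCount (hε : 0 < ε) (h : recCount x ε j ≠ j) :
    j + 2 ≤ recCount x ε j := by
  have := Finset.card_filter_offDiag_ne_one_of_symm (Finset.Icc 1 j)
    (fun a b => ‖x a - x b‖ < ε) fun a b hab => by rwa [norm_sub_rev]
  rw [recCount_eq_add_card_offDiag hε] at h ⊢
  omega

theorem frobEnt_eq_log_of_recCount_eq (h : recCount x ε j = j) :
    frobEnt x ε j = Real.log j := by
  rw [frobEnt, frobPot, h, sq, div_self_mul_self', Real.log_inv, neg_neg]

theorem frobEnt_succ_le (hj : 1 ≤ j) (h₀ : recCount x ε j = j)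
    (h₁ : j + 3 ≤ recCount x ε (j + 1)) : frobEnt x ε (j + 1) ≤ frobEnt x ε j := by
  have hj' : (1 : ℝ) ≤ j := by exact_mod_cast hj
  have h₁' : (j : ℝ) + 3 ≤ recCount x ε (j + 1) := by exact_mod_cast h₁
  rw [frobEnt_eq_log_of_recCount_eq h₀, frobEnt, neg_le, ← Real.log_inv]
  refine Real.log_le_log (by positivity) ?_
  calc (j : ℝ)⁻¹ ≤ (j + 3) / (j + 1) ^ 2 := by
        rw [inv_eq_one_div, div_le_div_iff₀ (by positivity) (by positivity)]; nlinarith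
    _ ≤ frobPot x ε (j + 1) := by rw [frobPot]; push_cast; gcongr

end FrobeniusEntropy

theorem stmt_0_general (m n : ℕ)
    (x : ℕ → EuclideanSpace ℝ (Fin m)) (ε : ℝ) (hε : 0 < ε) :
    (∀ j : ℕ, 1 ≤ j → j + 1 ≤ n → frobEnt x ε j < frobEnt x ε (j + 1)) ↔
      (∀ j k : ℕ, 1 ≤ j → j ≤ n → 1 ≤ k → k ≤ n → j ≠ k → ε ≤ ‖x j - x k‖) := by
  constructor
  · intro hmono
    have hself : ∀ j, 1 ≤ j → j ≤ n → recCount x ε j = j := by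
      intro j hj
      induction j, hj using Nat.le_induction with
      | base => exact fun _ => (recCount_eq_self_iff hε).2 fun a b _ _ _ _ hab => by omega
      | succ j hj ih =>
        intro hjn
        by_contra hne
        exact (hmono j hj hjn).not_ge
          (frobEnt_succ_le hj (ih (by omega)) (add_two_le_recCount hε hne))
    intro a b ha han
    exact (recCount_eq_self_iff hε).1 (hself n (by omega) le_rfl) a b ha han
  · intro hfar j hj hjn
    have hself (k : ℕ) (hk : k ≤ n) : recCount x ε k = k :=
      (recCount_eq_self_iff hε).2 fun a b ha hak hb hbk => hfar a b ha (by omega) hb (by omega)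
    rw [frobEnt_eq_log_of_recCount_eq (hself j (by omega)),
      frobEnt_eq_log_of_recCount_eq (hself (j + 1) hjn)]
    exact Real.log_lt_log (by positivity) (by simp)

/-- the ε-Frobenius entropy is strictly increasing in the time index iff all
pairwise distances between distinct snapshots are at least ε. -/
theorem stmt_0 (m n : ℕ) (hm : 0 < m) (hn : 1 < n)
    (x : ℕ → EuclideanSpace ℝ (Fin m)) (ε : ℝ) (hε : 0 < ε) :
    (∀ j : ℕ, 1 ≤ j → j + 1 ≤ n → frobEnt x ε j < frobEnt x ε (j + 1)) ↔
      (∀ j k : ℕ, 1 ≤ j → j ≤ n → 1 ≤ k → k ≤ n → j ≠ k → ε ≤ ‖x j - x k‖) :=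
  stmt_0_general m n x ε hε
end

section
/- Let m, n be positive integers with n > 1, let x_1, …, x_n ∈ ℝ^m, and let ε > 0. If the ε-Frobenius potential is strictly decreasing, i.e., v_{j+1} < v_j for every j ∈ {1,…,n−1}, then v_j = 1/j (equivalently N_j = j) for every j ∈ {1,…,n}, and δ_j = 1 for every j ∈ {1,…,n−1}. -/
/-- `δ_j = 2·#{k ∈ {1,…,j} : ‖x_{j+1} − x_k‖ < ε} + 1`. -/
noncomputable def deltaCount {m : ℕ} (x : ℕ → EuclideanSpace ℝ (Fin m)) (ε : ℝ) (j : ℕ) : ℕ :=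
  2 * ((Finset.Icc 1 j).filter (fun k => ‖x (j + 1) - x k‖ < ε)).card + 1

lemma recCount_succ {m : ℕ} (x : ℕ → EuclideanSpace ℝ (Fin m)) (ε : ℝ) (hε : 0 < ε) (j : ℕ) :
    recCount x ε (j + 1) = recCount x ε j + deltaCount x ε j := by
  classical
  have hnot : (j + 1) ∉ Finset.Icc 1 j := by simp
  have hins : Finset.Icc 1 (j + 1) = insert (j + 1) (Finset.Icc 1 j) := by
    ext k; simp [Finset.mem_Icc]; omega
  have hdiag : ‖x (j+1) - x (j+1)‖ < ε := by simpa using hε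
  have hsymm : ∀ k, (if ‖x k - x (j+1)‖ < ε then 1 else 0)
      = (if ‖x (j+1) - x k‖ < ε then (1:ℕ) else 0) := by
    intro k; rw [norm_sub_rev]
  rw [recCount, recCount, deltaCount, hins]
  rw [Finset.card_filter, Finset.card_filter, Finset.card_filter, Finset.sum_product,
    Finset.sum_product, Finset.sum_insert hnot]
  simp only [Finset.sum_insert hnot]
  rw [if_pos hdiag]
  simp only [hsymm]
  rw [Finset.sum_add_distrib]
  ring

/-- if the ε-Frobenius potential is strictly decreasing, then `v_j = 1/j`
(equivalently `N_j = j`) for all `j ∈ {1,…,n}` and `δ_j = 1` for all `j ∈ {1,…,n−1}`. -/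
theorem stmt_1 (m n : ℕ) (hm : 0 < m) (hn : 1 < n)
    (x : ℕ → EuclideanSpace ℝ (Fin m)) (ε : ℝ) (hε : 0 < ε)
    (hdec : ∀ j : ℕ, 1 ≤ j → j + 1 ≤ n → frobPot x ε (j + 1) < frobPot x ε j) :
    (∀ j : ℕ, 1 ≤ j → j ≤ n → frobPot x ε j = 1 / (j : ℝ) ∧ recCount x ε j = j) ∧
      (∀ j : ℕ, 1 ≤ j → j + 1 ≤ n → deltaCount x ε j = 1) := by
  have key : ∀ j : ℕ, 1 ≤ j → j ≤ n → recCount x ε j = j := by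
    intro j
    induction j with
    | zero => intro h; omega
    | succ j ih =>
      intro _ hjn
      rcases Nat.eq_zero_or_pos j with hj0 | hj
      · subst hj0
        simp [recCount, Finset.filter_singleton, sub_self, hε]
      · have hN := ih hj (by omega)
        have hd := hdec j hj hjn
        have hrec := recCount_succ x ε hε j
        have hj0 : (0:ℝ) < (j:ℝ) := by exact_mod_cast hj
        have hj1 : (0:ℝ) < ((j:ℝ)+1)^2 := by positivity
        rw [frobPot, frobPot, hN] at hd
        push_cast at hd
        rw [div_lt_div_iff₀ hj1 (by positivity)] at hd
        have hlt : recCount x ε (j+1) * j^2 < j * (j+1)^2 := by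
          have : ((recCount x ε (j+1) * j^2 : ℕ) : ℝ) < ((j * (j+1)^2 : ℕ) : ℝ) := by
            push_cast; nlinarith [hd]
          exact_mod_cast this
        set c := ((Finset.Icc 1 j).filter (fun k => ‖x (j + 1) - x k‖ < ε)).card with hc
        rw [hrec, deltaCount, ← hc] at hlt ⊢
        have hc0 : c = 0 := by nlinarith
        rw [hc0]; omega
  refine ⟨fun j h1 h2 => ⟨?_, key j h1 h2⟩, fun j h1 h2 => ?_⟩
  · have hj0 : (0:ℝ) < (j:ℝ) := by exact_mod_cast h1
    rw [frobPot, key j h1 h2]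
    field_simp
  · have h3 := key j h1 (by omega)
    have h4 := key (j+1) (by omega) h2
    have := recCount_succ x ε hε j
    omega
end

section
/- Let m, n, ℓ be positive integers with ℓ ≤ m, and let X ∈ ℝ^{m×n} be a matrix with columns x_1, …, x_n ∈ ℝ^m. Let λ_1 ≥ λ_2 ≥ … ≥ λ_m ≥ 0 be the eigenvalues of the symmetric positive semidefinite matrix X Xᵀ, listed in decreasing order. Then for every matrix Q ∈ ℝ^{m×ℓ} with Qᵀ Q = I_ℓ one has ∑_{k=1}^{n} ‖x_k − Q Qᵀ x_k‖² ≥ ∑_{k=ℓ+1}^{m} λ_k, and there exists a matrix Q ∈ ℝ^{m×ℓ} with Qᵀ Q = I_ℓ (whose columns are orthonormal eigenvectors of X Xᵀ associated with its ℓ largest eigenvalues) for which equality holds; hence min_{Q : QᵀQ = I_ℓ} ∑_{k=1}^{n} ‖x_k − Q Qᵀ x_k‖² = ∑_{k=ℓ+1}^{m} λ_k. -/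
/-!
The residual of projecting the columns of `X` onto the span of the orthonormal columns of `Q` is
`tr (X Xᵀ) - tr (Qᵀ (X Xᵀ) Q)`, so the theorem is Ky Fan's maximum principle
`tr (Qᵀ A Q) ≤ λ₁ + ⋯ + λ_ℓ` for `A = X Xᵀ`, together with its equality case.
Writing `A = V diag(λ) Vᵀ` with `V` orthogonal, `tr (Qᵀ A Q) = ∑ⱼ λⱼ sⱼ`, where `sⱼ` is the squared
norm of the `j`-th row of `Vᵀ Q`. Since `Vᵀ Q` again has orthonormal columns, `0 ≤ sⱼ ≤ 1` and
`∑ⱼ sⱼ = ℓ`, and a weighted sum of the decreasing `λⱼ` with such weights is at most the sum of the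
first `ℓ` of them. The first `ℓ` columns of `V` attain equality.
-/

open Finset Matrix

theorem sum_mul_le_sum_of_threshold {ι : Type*} [Fintype ι] [DecidableEq ι] (S : Finset ι)
    {d s : ι → ℝ} (t : ℝ) (hS : ∀ i ∈ S, t ≤ d i) (hSc : ∀ i ∉ S, d i ≤ t)
    (hs0 : ∀ i, 0 ≤ s i) (hs1 : ∀ i, s i ≤ 1) (hsum : ∑ i, s i = #S) :
    ∑ i, d i * s i ≤ ∑ i ∈ S, d i := by
  have hin : ∑ i ∈ S, (d i - t) * s i ≤ ∑ i ∈ S, (d i - t) :=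
    sum_le_sum fun i hi => mul_le_of_le_one_right (sub_nonneg.2 (hS i hi)) (hs1 i)
  have hout : ∑ i ∈ Sᶜ, (d i - t) * s i ≤ 0 :=
    sum_nonpos fun i hi =>
      mul_nonpos_of_nonpos_of_nonneg (sub_nonpos.2 (hSc i (mem_compl.1 hi))) (hs0 i)
  have hshifted : ∑ i, (d i - t) * s i ≤ ∑ i ∈ S, (d i - t) := by
    rw [← sum_add_sum_compl S]
    linarith
  simp only [sub_mul, sum_sub_distrib, ← mul_sum, hsum, sum_const, nsmul_eq_mul] at hshifted
  linarith

theorem Fin.sum_castLE_eq_sum_filter_lt {M : Type*} [AddCommMonoid M] {ℓ m : ℕ} (h : ℓ ≤ m)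
    (f : Fin m → M) :
    ∑ c : Fin ℓ, f (Fin.castLE h c) = ∑ i ∈ univ.filter (fun i : Fin m => (i : ℕ) < ℓ), f i := by
  have hrange : univ.filter (fun i : Fin m => (i : ℕ) < ℓ) = univ.map (Fin.castLEEmb h) := by
    ext i
    simp only [mem_filter, mem_univ, true_and, mem_map, Fin.castLEEmb_apply, Fin.exists_iff]
    exact ⟨fun hi => ⟨i, hi, rfl⟩, fun ⟨_, hj, hji⟩ => hji ▸ hj⟩
  rw [hrange, sum_map]
  rfl

namespace Matrix

variable {R : Type*} {l m n : Type*}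

theorem sum_sum_sq_eq_trace_transpose_mul [CommSemiring R] [Fintype m] [Fintype n]
    (M : Matrix m n R) : ∑ k, ∑ i, M i k ^ 2 = trace (Mᵀ * M) := by
  simp [trace, mul_apply, sq]

theorem trace_transpose_mul_diagonal_mul [CommSemiring R] [Fintype l] [Fintype m] [DecidableEq m]
    (d : m → R) (B : Matrix m l R) :
    trace (Bᵀ * diagonal d * B) = ∑ j, d j * ∑ c, B j c ^ 2 := by
  rw [trace_mul_comm, ← Matrix.mul_assoc]
  simp [trace, mul_apply, diagonal, sq, mul_sum, mul_comm]

section OrthonormalColumns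

variable [Fintype l] [Fintype m] [DecidableEq l] {B : Matrix m l ℝ}

theorem sum_sq_row_le_one_of_transpose_mul_self_eq_one (hB : Bᵀ * B = 1) (j : m) :
    ∑ c, B j c ^ 2 ≤ 1 := by
  set G := B * Bᵀ
  have hG : G * G = G := by
    rw [Matrix.mul_assoc, ← Matrix.mul_assoc Bᵀ, hB, Matrix.one_mul]
  have hGjj : G j j = ∑ c, B j c ^ 2 := by simp [G, mul_apply, sq]
  have hsq : G j j ^ 2 ≤ G j j :=
    calc G j j ^ 2 ≤ ∑ p, G j p ^ 2 :=
          single_le_sum (f := fun p => G j p ^ 2) (fun p _ => sq_nonneg _) (mem_univ j)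
      _ = G j j := by
          conv_rhs => rw [← hG]
          simp [G, mul_apply, sq, mul_comm]
  have hGjj_nonneg : 0 ≤ G j j := hGjj ▸ sum_nonneg fun c _ => sq_nonneg (B j c)
  rw [← hGjj]
  nlinarith

theorem sum_sum_sq_eq_card_of_transpose_mul_self_eq_one (hB : Bᵀ * B = 1) :
    ∑ j, ∑ c, B j c ^ 2 = Fintype.card l := by
  have h := sum_sum_sq_eq_trace_transpose_mul Bᵀ
  simp only [transpose_apply, transpose_transpose] at h
  rw [h, trace_mul_comm, hB, trace_one]

end OrthonormalColumns

theorem trace_transpose_mul_mul_le_sum [Fintype l] [Fintype m] [DecidableEq m] [DecidableEq l]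
    {V : Matrix m m ℝ} (hV : V * Vᵀ = 1) (d : m → ℝ) {Q : Matrix m l ℝ} (hQ : Qᵀ * Q = 1)
    (S : Finset m) (t : ℝ) (hS : ∀ i ∈ S, t ≤ d i) (hSc : ∀ i ∉ S, d i ≤ t)
    (hcard : #S = Fintype.card l) :
    trace (Qᵀ * (V * diagonal d * Vᵀ) * Q) ≤ ∑ i ∈ S, d i := by
  set B := Vᵀ * Q
  have hB : Bᵀ * B = 1 := by
    rw [transpose_mul, transpose_transpose, Matrix.mul_assoc, ← Matrix.mul_assoc V, hV,
      Matrix.one_mul, hQ]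
  have hconj : Qᵀ * (V * diagonal d * Vᵀ) * Q = Bᵀ * diagonal d * B := by
    simp only [B, transpose_mul, transpose_transpose, Matrix.mul_assoc]
  rw [hconj, trace_transpose_mul_diagonal_mul]
  refine sum_mul_le_sum_of_threshold S t hS hSc (fun j => sum_nonneg fun c _ => sq_nonneg _)
    (sum_sq_row_le_one_of_transpose_mul_self_eq_one hB) ?_
  rw [sum_sum_sq_eq_card_of_transpose_mul_self_eq_one hB, hcard]

theorem trace_transpose_mul_mul_le_sum_filter_lt {m ℓ : ℕ} (hℓ : 0 < ℓ) (hℓm : ℓ ≤ m)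
    {V : Matrix (Fin m) (Fin m) ℝ} (hV : V * Vᵀ = 1) {d : Fin m → ℝ} (hd : Antitone d)
    {Q : Matrix (Fin m) (Fin ℓ) ℝ} (hQ : Qᵀ * Q = 1) :
    trace (Qᵀ * (V * diagonal d * Vᵀ) * Q) ≤
      ∑ i ∈ univ.filter (fun i : Fin m => (i : ℕ) < ℓ), d i := by
  refine trace_transpose_mul_mul_le_sum hV d hQ _ (d ⟨ℓ - 1, by omega⟩) (fun i hi => ?_)
    (fun i hi => ?_) (by rw [Fin.card_filter_val_lt, Fintype.card_fin, min_eq_right hℓm])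
  · simp only [mem_filter, mem_univ, true_and] at hi
    exact hd (Fin.le_def.2 (by simp only; omega))
  · simp only [mem_filter, mem_univ, true_and] at hi
    exact hd (Fin.le_def.2 (by simp only; omega))

theorem sum_sum_sq_sub_mul_transpose_mul [CommRing R] [Fintype l] [Fintype m] [Fintype n]
    [DecidableEq l] (X : Matrix m n R) {Q : Matrix m l R} (hQ : Qᵀ * Q = 1) :
    ∑ k, ∑ i, (X i k - (Q * Qᵀ * X) i k) ^ 2 = trace (X * Xᵀ) - trace (Qᵀ * (X * Xᵀ) * Q) := by
  have hres : (X - Q * Qᵀ * X)ᵀ * (X - Q * Qᵀ * X) = Xᵀ * X - (Qᵀ * X)ᵀ * (Qᵀ * X) := by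
    simp only [transpose_sub, transpose_mul, transpose_transpose, Matrix.sub_mul, Matrix.mul_sub,
      Matrix.mul_assoc]
    rw [← Matrix.mul_assoc Qᵀ Q, hQ, Matrix.one_mul]
    abel
  simp only [← sub_apply, sum_sum_sq_eq_trace_transpose_mul, hres, trace_sub, transpose_mul,
    transpose_transpose]
  rw [trace_mul_comm Xᵀ, trace_mul_comm (Xᵀ * Q)]
  simp only [Matrix.mul_assoc]

theorem IsHermitian.exists_orthogonal_eq_mul_diagonal_mul_transpose [Fintype m] [DecidableEq m]
    {A : Matrix m m ℝ} (hA : A.IsHermitian) {d : m → ℝ}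
    (hd : ∃ σ : Equiv.Perm m, ∀ i, d i = hA.eigenvalues (σ i)) :
    ∃ V : Matrix m m ℝ, Vᵀ * V = 1 ∧ V * Vᵀ = 1 ∧ A = V * diagonal d * Vᵀ := by
  obtain ⟨σ, hσ⟩ := hd
  set U := (hA.eigenvectorUnitary : Matrix m m ℝ)
  have hUU : Uᵀ * U = 1 := by
    simpa [star_eq_conjTranspose] using Unitary.coe_star_mul_self hA.eigenvectorUnitary
  have hUU' : U * Uᵀ = 1 := by
    simpa [star_eq_conjTranspose] using Unitary.coe_mul_star_self hA.eigenvectorUnitary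
  have hAU : A = U * diagonal hA.eigenvalues * Uᵀ := by
    simpa [star_eq_conjTranspose, Function.comp_def] using hA.spectral_theorem
  refine ⟨U.submatrix id σ, ?_, ?_, ?_⟩
  · rw [transpose_submatrix, ← submatrix_mul _ _ _ _ _ Function.bijective_id, hUU,
      submatrix_one_equiv]
  · rw [transpose_submatrix, submatrix_mul_equiv, hUU', submatrix_id_id]
  · have hdσ : d = hA.eigenvalues ∘ σ := funext hσ
    rw [hdσ, ← submatrix_diagonal_equiv, transpose_submatrix, submatrix_mul_equiv,
      submatrix_mul_equiv, submatrix_id_id, ← hAU]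

theorem mulVec_col_eq_smul_of_mul_eq_mul_diagonal [CommSemiring R] [Fintype l] [Fintype m]
    [DecidableEq l] {A : Matrix m m R} {Q : Matrix m l R} {d : l → R}
    (h : A * Q = Q * diagonal d) (c : l) :
    A *ᵥ (fun i => Q i c) = d c • fun i => Q i c := by
  funext i
  have hic := congrFun (congrFun h i) c
  rw [mul_diagonal, mul_apply] at hic
  simpa [mulVec, dotProduct, mul_comm] using hic

section ColumnSubmatrix

variable [CommSemiring R] [Fintype m] [DecidableEq m] [DecidableEq l] {V : Matrix m m R}

theorem transpose_mul_self_submatrix_eq_one (hV : Vᵀ * V = 1) (e : l ↪ m) :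
    (V.submatrix id e)ᵀ * V.submatrix id e = 1 := by
  rw [transpose_submatrix, ← submatrix_mul _ _ _ _ _ Function.bijective_id, hV,
    submatrix_one_embedding]

theorem mul_diagonal_mul_transpose_mul_submatrix [Fintype l] (hV : Vᵀ * V = 1) (d : m → R) (e : l ↪ m) :
    V * diagonal d * Vᵀ * V.submatrix id e = V.submatrix id e * diagonal (d ∘ e) :=
  calc V * diagonal d * Vᵀ * V.submatrix id e
      = (V * diagonal d * Vᵀ * V).submatrix id e :=
        (submatrix_mul (V * diagonal d * Vᵀ) V id id e Function.bijective_id).symm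
    _ = (V * diagonal d).submatrix id e := by rw [Matrix.mul_assoc _ Vᵀ, hV, Matrix.mul_one]
    _ = V.submatrix id e * diagonal (d ∘ e) := by ext i c; simp [mul_diagonal]

theorem trace_transpose_submatrix_mul_mul_submatrix [Fintype l] (hV : Vᵀ * V = 1) (d : m → R)
    (e : l ↪ m) :
    trace ((V.submatrix id e)ᵀ * (V * diagonal d * Vᵀ) * V.submatrix id e) = ∑ c, d (e c) := by
  rw [Matrix.mul_assoc, mul_diagonal_mul_transpose_mul_submatrix hV, ← Matrix.mul_assoc,
    transpose_mul_self_submatrix_eq_one hV, Matrix.one_mul, trace_diagonal]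
  rfl

end ColumnSubmatrix

end Matrix

theorem stmt_9_general (m n ℓ : ℕ) (hℓ : 0 < ℓ) (hℓm : ℓ ≤ m)
    (X : Matrix (Fin m) (Fin n) ℝ)
    (hA : (X * X.transpose).IsHermitian)
    (lam : Fin m → ℝ)
    (hdec : ∀ i j : Fin m, i ≤ j → lam j ≤ lam i)
    (heig : ∃ σ : Equiv.Perm (Fin m), ∀ i : Fin m, lam i = hA.eigenvalues (σ i)) :
    (∀ Q : Matrix (Fin m) (Fin ℓ) ℝ, Q.transpose * Q = 1 →
        ∑ k ∈ Finset.univ.filter (fun k : Fin m => ℓ ≤ (k : ℕ)), lam k ≤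
          ∑ k : Fin n, ∑ i : Fin m, (X i k - (Q * Q.transpose * X) i k) ^ 2) ∧
      ∃ Q : Matrix (Fin m) (Fin ℓ) ℝ, Q.transpose * Q = 1 ∧
        (∀ c : Fin ℓ, (X * X.transpose).mulVec (fun i => Q i c) =
          lam (Fin.castLE hℓm c) • (fun i => Q i c)) ∧
        ∑ k : Fin n, ∑ i : Fin m, (X i k - (Q * Q.transpose * X) i k) ^ 2 =
          ∑ k ∈ Finset.univ.filter (fun k : Fin m => ℓ ≤ (k : ℕ)), lam k := by
  obtain ⟨V, hVV, hVV', hXV⟩ := hA.exists_orthogonal_eq_mul_diagonal_mul_transpose heig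
  have htrace : trace (X * Xᵀ) = ∑ i ∈ univ.filter (fun i : Fin m => (i : ℕ) < ℓ), lam i +
      ∑ k ∈ univ.filter (fun k : Fin m => ℓ ≤ (k : ℕ)), lam k := by
    rw [hXV, trace_mul_cycle, hVV, Matrix.one_mul, trace_diagonal,
      ← sum_filter_add_sum_filter_not univ (fun i : Fin m => (i : ℕ) < ℓ)]
    simp only [not_lt]
  refine ⟨fun Q hQ => ?_, V.submatrix id (Fin.castLEEmb hℓm),
    transpose_mul_self_submatrix_eq_one hVV _, fun c => ?_, ?_⟩
  · have hKyFan := trace_transpose_mul_mul_le_sum_filter_lt hℓ hℓm hVV' hdec hQ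
    rw [← hXV] at hKyFan
    rw [sum_sum_sq_sub_mul_transpose_mul X hQ]
    linarith
  · rw [hXV]
    exact mulVec_col_eq_smul_of_mul_eq_mul_diagonal
      (mul_diagonal_mul_transpose_mul_submatrix hVV lam _) c
  · rw [sum_sum_sq_sub_mul_transpose_mul X (transpose_mul_self_submatrix_eq_one hVV _), htrace,
      hXV, trace_transpose_submatrix_mul_mul_submatrix hVV]
    simp only [Fin.coe_castLEEmb, Fin.sum_castLE_eq_sum_filter_lt]
    ring

/-- optimality of the POD projector / Eckart–Young for projections:
for a matrix `X ∈ ℝ^{m×n}` with columns `x_k`, letting `λ_1 ≥ … ≥ λ_m ≥ 0` be the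
eigenvalues of the symmetric PSD matrix `X Xᵀ` in decreasing order (counted with
multiplicity), every matrix `Q ∈ ℝ^{m×ℓ}` with orthonormal columns satisfies
`∑_k ‖x_k − Q Qᵀ x_k‖² ≥ ∑_{k=ℓ+1}^m λ_k`, and there exists such a `Q` — whose columns
are orthonormal eigenvectors of `X Xᵀ` for its `ℓ` largest eigenvalues — attaining
equality; hence the minimum equals `∑_{k=ℓ+1}^m λ_k`. -/
theorem stmt_9 (m n ℓ : ℕ) (hm : 0 < m) (hn : 0 < n) (hℓ : 0 < ℓ) (hℓm : ℓ ≤ m)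
    (X : Matrix (Fin m) (Fin n) ℝ)
    (hA : (X * X.transpose).IsHermitian)
    (lam : Fin m → ℝ)
    (hdec : ∀ i j : Fin m, i ≤ j → lam j ≤ lam i)
    (hnonneg : ∀ i : Fin m, 0 ≤ lam i)
    (heig : ∃ σ : Equiv.Perm (Fin m), ∀ i : Fin m, lam i = hA.eigenvalues (σ i)) :
    (∀ Q : Matrix (Fin m) (Fin ℓ) ℝ, Q.transpose * Q = 1 →
        ∑ k ∈ Finset.univ.filter (fun k : Fin m => ℓ ≤ (k : ℕ)), lam k ≤
          ∑ k : Fin n, ∑ i : Fin m, (X i k - (Q * Q.transpose * X) i k) ^ 2) ∧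
      ∃ Q : Matrix (Fin m) (Fin ℓ) ℝ, Q.transpose * Q = 1 ∧
        (∀ c : Fin ℓ, (X * X.transpose).mulVec (fun i => Q i c) =
          lam (Fin.castLE hℓm c) • (fun i => Q i c)) ∧
        ∑ k : Fin n, ∑ i : Fin m, (X i k - (Q * Q.transpose * X) i k) ^ 2 =
          ∑ k ∈ Finset.univ.filter (fun k : Fin m => ℓ ≤ (k : ℕ)), lam k :=
  stmt_9_general m n ℓ hℓ hℓm X hA lam hdec heig
end
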